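/- Let f be a transcendental entire function for which there exist constants A, B, C, r₀ > 1 such that A·log M(r,f) ≤ log M(Cr,f) ≤ B·log M(r,f) for all r ≥ r₀. Let α₁, α₂, η > 0 and q, λ ≥ 0 be such that dens(T(f,α₁,α₂,q,λ), A(R)) > η for all large R, let μ > 0, and set t(R) = 2μR/(α₁·log M(R,f)). Then for all sufficiently large R there exist a positive integer m(R) ≥ (η/2)·(R/t(R))² and points a₁, …, a_{m(R)} ∈ T(f,α₁,α₂,q,λ) ∩ A(R) such that D(a_j, t(R)) ⊂ A(R) for all j and D(a_j, t(R)) ∩ D(a_k, t(R)) = ∅ for j ≠ k. -/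

import Mathlib

open scoped ENNReal

/-- The maximum modulus `M(r,f) = max_{|z|=r} |f(z)|`. -/
noncomputable def maxMod (f : ℂ → ℂ) (r : ℝ) : ℝ :=
  sSup ((fun z => ‖f z‖) '' Metric.sphere (0 : ℂ) r)

/-- The closed annulus `A(R) = {z : R ≤ |z| ≤ 2R}`. -/
def annulus (R : ℝ) : Set ℂ := {z | R ≤ ‖z‖ ∧ ‖z‖ ≤ 2 * R}

/-- The density of `X` in `Y`: `area(X ∩ Y)/area(Y)`. -/
noncomputable def densIn (X Y : Set ℂ) : ℝ :=
  (MeasureTheory.volume (X ∩ Y)).toReal / (MeasureTheory.volume Y).toReal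

/-- The set `T(f,α₁,α₂,q,λ)` of points `z` satisfying
(i) `α₁ log M(|z|,f) ≤ |z f'(z)/f(z)| ≤ α₂ log M(|z|,f)`;
(ii) `|f(z)| ≥ |z|^q`; and
(iii) `|ζ f'(ζ)/f(ζ)| ≤ α₂ log M(|ζ|,f)` for `|ζ - z| ≤ λ |z| / log M(|z|,f)`. -/
noncomputable def Tset (f : ℂ → ℂ) (α₁ α₂ q lam : ℝ) : Set ℂ :=
  {z | (α₁ * Real.log (maxMod f (‖z‖)) ≤ ‖z * deriv f z / f z‖) ∧
       (‖z * deriv f z / f z‖ ≤ α₂ * Real.log (maxMod f (‖z‖))) ∧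
       (‖z‖ ^ q ≤ ‖f z‖) ∧
       (∀ ζ : ℂ, ‖ζ - z‖ ≤ lam * ‖z‖ / Real.log (maxMod f (‖z‖)) →
         ‖ζ * deriv f ζ / f ζ‖ ≤ α₂ * Real.log (maxMod f (‖ζ‖)))}

/-!
Since `f` is entire and not constant, Liouville's theorem gives `log M(R, f) → ∞`, so `t(R)` is
eventually a small multiple of `R`. Removing from `A(R)` its two boundary strips of width `t`,
of total area `6πRt`, leaves a part `S` of `T ∩ A(R)` of area at least `8ηR²`. The half-open
squares of side `2t` meeting `S` have total area at least `area S`, and one of the four parity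
classes of these squares contains at least a quarter of them. One point of `S` in each square of
that class gives points at mutual distance at least `2t`, hence disjoint disks of radius `t`
inside `A(R)`, and there are at least `area S / (16t²) ≥ (η/2)(R/t)²` of them.
-/

open MeasureTheory Metric Filter Set
open scoped Finset
open scoped Real

section MaxModulus

variable {f : ℂ → ℂ}

lemma bddAbove_norm_image_sphere (hf : Continuous f) (r : ℝ) :
    BddAbove ((fun z => ‖f z‖) '' sphere (0 : ℂ) r) :=
  ((isCompact_sphere 0 r).image (continuous_norm.comp hf)).bddAbove

lemma norm_le_maxMod (hf : Differentiable ℂ f) {z : ℂ} {r : ℝ} (hz : ‖z‖ ≤ r) :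
    ‖f z‖ ≤ maxMod f r := by
  have hsphere : ∀ w : ℂ, ‖w‖ = r → ‖f w‖ ≤ maxMod f r := fun w hw =>
    le_csSup (bddAbove_norm_image_sphere hf.continuous r) ⟨w, by simpa using hw, rfl⟩
  rcases hz.eq_or_lt with hz | hz
  · exact hsphere z hz
  have hr : r ≠ 0 := ((norm_nonneg z).trans_lt hz).ne'
  refine Complex.norm_le_of_forall_mem_frontier_norm_le (U := ball 0 r) isBounded_ball
    hf.diffContOnCl (fun w hw => hsphere w ?_) ?_
  · simpa [frontier_ball (0 : ℂ) hr] using hw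
  · simpa [closure_ball (0 : ℂ) hr] using hz.le

lemma tendsto_maxMod_atTop (hf : Differentiable ℂ f) (hnc : ¬ ∃ c, ∀ z, f z = c) :
    Tendsto (maxMod f) atTop atTop := by
  refine tendsto_atTop_atTop.2 fun K => ?_
  obtain ⟨z, hz⟩ : ∃ z, K < ‖f z‖ := by
    by_contra! hK
    exact hnc ⟨f 0, fun z => hf.apply_eq_apply_of_bounded
      (isBounded_iff_forall_norm_le.2 ⟨K, by rintro _ ⟨w, rfl⟩; exact hK w⟩) z 0⟩
  exact ⟨‖z‖, fun r hr => hz.le.trans (norm_le_maxMod hf hr)⟩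

end MaxModulus

section Grid

noncomputable def gridCell (s : ℝ) (z : ℂ) : ℤ × ℤ := (⌊z.re / s⌋, ⌊z.im / s⌋)

variable {s : ℝ}

lemma volume_gridCell_preimage (hs : 0 < s) (p : ℤ × ℤ) :
    volume (gridCell s ⁻¹' {p}) = ENNReal.ofReal (s ^ 2) := by
  have hcell : gridCell s ⁻¹' {p} = Complex.measurableEquivRealProd ⁻¹'
      (Ico (p.1 * s) ((p.1 + 1) * s) ×ˢ Ico (p.2 * s) ((p.2 + 1) * s)) := by
    ext z
    simp only [gridCell, mem_preimage, mem_singleton_iff, Prod.ext_iff,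
      Complex.measurableEquivRealProd_apply, mem_prod, mem_Ico, Int.floor_eq_iff,
      le_div_iff₀ hs, div_lt_iff₀ hs]
  rw [hcell, Complex.volume_preserving_equiv_real_prod.measure_preimage
    (measurableSet_Ico.prod measurableSet_Ico).nullMeasurableSet, Measure.volume_eq_prod,
    Measure.prod_prod, Real.volume_Ico, Real.volume_Ico, ← ENNReal.ofReal_mul (by linarith)]
  ring_nf

lemma volume_real_le_card_mul_of_mapsTo (hs : 0 < s) {S : Set ℂ} {I : Finset (ℤ × ℤ)}
    (hSI : MapsTo (gridCell s) S I) : volume.real S ≤ #I * s ^ 2 := by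
  have hcover : S ⊆ ⋃ p ∈ I, gridCell s ⁻¹' {p} := fun z hz => mem_biUnion (hSI hz) rfl
  have hle : volume S ≤ #I * ENNReal.ofReal (s ^ 2) := calc
    volume S ≤ ∑ p ∈ I, volume (gridCell s ⁻¹' {p}) :=
      (measure_mono hcover).trans (measure_biUnion_finset_le I _)
    _ = #I * ENNReal.ofReal (s ^ 2) := by
      simp [volume_gridCell_preimage hs]
  calc volume.real S ≤ (#I * ENNReal.ofReal (s ^ 2)).toReal :=
        ENNReal.toReal_mono (by finiteness) hle
    _ = #I * s ^ 2 := by simp [ENNReal.toReal_ofReal (sq_nonneg s)]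

lemma finite_image_gridCell (hs : 0 ≤ s) {S : Set ℂ} (hS : Bornology.IsBounded S) :
    (gridCell s '' S).Finite := by
  obtain ⟨ρ, hρ⟩ := (isBounded_iff_subset_closedBall 0).1 hS
  have hfloor : ∀ u : ℝ, |u| ≤ ρ → ⌊-ρ / s⌋ ≤ ⌊u / s⌋ ∧ ⌊u / s⌋ ≤ ⌊ρ / s⌋ := fun u hu =>
    ⟨Int.floor_mono (div_le_div_of_nonneg_right (neg_le_of_abs_le hu) hs),
      Int.floor_mono (div_le_div_of_nonneg_right (le_of_abs_le hu) hs)⟩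
  refine (Set.finite_Icc (⌊-ρ / s⌋, ⌊-ρ / s⌋) (⌊ρ / s⌋, ⌊ρ / s⌋)).subset ?_
  rintro _ ⟨z, hz, rfl⟩
  have hzρ : ‖z‖ ≤ ρ := by simpa using hρ hz
  obtain ⟨h₁, h₂⟩ := hfloor z.re ((Complex.abs_re_le_norm z).trans hzρ)
  obtain ⟨h₃, h₄⟩ := hfloor z.im ((Complex.abs_im_le_norm z).trans hzρ)
  exact ⟨⟨h₁, h₃⟩, ⟨h₂, h₄⟩⟩

lemma lt_abs_sub_of_two_le_abs_floor_div_sub (hs : 0 < s) {u v : ℝ}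
    (h : 2 ≤ |⌊u / s⌋ - ⌊v / s⌋|) : s < |u - v| := by
  have h' : (2 : ℝ) ≤ |(⌊u / s⌋ : ℝ) - ⌊v / s⌋| := by exact_mod_cast h
  have h1 : 1 < |u / s - v / s| := by
    rcases le_abs'.1 h' with h' | h' <;> rw [lt_abs] <;> [right; left] <;>
      linarith [Int.floor_le (u / s), Int.lt_floor_add_one (u / s), Int.floor_le (v / s),
        Int.lt_floor_add_one (v / s)]
  rwa [← sub_div, abs_div, abs_of_pos hs, lt_div_iff₀ hs, one_mul] at h1

lemma two_le_abs_sub_of_intCast_eq {a b : ℤ} (hne : a ≠ b) (h : (a : ZMod 2) = b) :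
    2 ≤ |a - b| := by
  rw [ZMod.intCast_eq_intCast_iff_dvd_sub] at h
  rw [le_abs]
  omega

lemma le_dist_of_gridCell_ne (hs : 0 < s) {x y : ℂ} (hne : gridCell s x ≠ gridCell s y)
    (hpar : (gridCell s x).map Int.cast Int.cast =
      ((gridCell s y).map Int.cast Int.cast : ZMod 2 × ZMod 2)) :
    s ≤ dist x y := by
  rw [Ne, Prod.ext_iff, not_and_or] at hne
  rw [Prod.ext_iff] at hpar
  rcases hne with hne | hne
  · calc s ≤ |x.re - y.re| := (lt_abs_sub_of_two_le_abs_floor_div_sub hs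
          (two_le_abs_sub_of_intCast_eq hne hpar.1)).le
      _ ≤ dist x y := by simpa [Complex.dist_eq] using Complex.abs_re_le_norm (x - y)
  · calc s ≤ |x.im - y.im| := (lt_abs_sub_of_two_le_abs_floor_div_sub hs
          (two_le_abs_sub_of_intCast_eq hne hpar.2)).le
      _ ≤ dist x y := by simpa [Complex.dist_eq] using Complex.abs_im_le_norm (x - y)

theorem exists_finset_separated_of_isBounded (hs : 0 < s) {S : Set ℂ}
    (hS : Bornology.IsBounded S) :
    ∃ P : Finset ℂ, ↑P ⊆ S ∧ (P : Set ℂ).Pairwise (fun x y => s ≤ dist x y) ∧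
      volume.real S ≤ 4 * s ^ 2 * #P := by
  classical
  set I := (finite_image_gridCell hs.le hS).toFinset
  have hvol : volume.real S ≤ #I * s ^ 2 :=
    volume_real_le_card_mul_of_mapsTo hs fun z hz => by simpa [I] using mem_image_of_mem _ hz
  set parity : ℤ × ℤ → ZMod 2 × ZMod 2 := fun p => p.map Int.cast Int.cast
  obtain ⟨c, -, hc⟩ := Finset.exists_le_card_fiber_of_nsmul_le_card_of_maps_to
    (s := I) (f := parity) (t := Finset.univ) (b := (#I : ℝ) / 4) (fun _ _ => Finset.mem_univ _)
    Finset.univ_nonempty (by simp [mul_div_cancel₀])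
  set J := I.filter (parity · = c)
  obtain ⟨P, hPS, hinj, hPJ⟩ := Finset.exists_subset_injOn_image_eq_of_surjOn S J fun p hp => by
    simpa [I] using (Finset.mem_filter.1 hp).1
  have hparity : ∀ x ∈ P, parity (gridCell s x) = c := fun x hx => by
    have hxJ : gridCell s x ∈ J := hPJ ▸ Finset.mem_image_of_mem _ hx
    exact (Finset.mem_filter.1 hxJ).2
  refine ⟨P, hPS, fun x hx y hy hxy => ?_, ?_⟩
  · exact le_dist_of_gridCell_ne hs (hinj.ne hx hy hxy) ((hparity x hx).trans (hparity y hy).symm)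
  · rw [← Finset.card_image_of_injOn hinj, hPJ]
    nlinarith

end Grid

lemma annulus_eq_closedBall_diff_ball (R : ℝ) : annulus R = closedBall 0 (2 * R) \ ball 0 R := by
  ext z
  simp [annulus, and_comm]

lemma volume_real_closedBall_diff_ball (a : ℂ) {r₁ r₂ : ℝ} (h₁ : 0 ≤ r₁) (h₁₂ : r₁ ≤ r₂) :
    volume.real (closedBall a r₂ \ ball a r₁) = π * (r₂ ^ 2 - r₁ ^ 2) := by
  rw [measureReal_sdiff (ball_subset_closedBall.trans (closedBall_subset_closedBall h₁₂))
    measurableSet_ball measure_closedBall_lt_top.ne, measureReal_def, measureReal_def,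
    Complex.volume_closedBall, Complex.volume_ball]
  simp [ENNReal.toReal_ofReal h₁, ENNReal.toReal_ofReal (h₁.trans h₁₂)]
  ring

lemma ball_subset_closedBall_diff_ball {E : Type*} [PseudoMetricSpace E] {a x : E} {r₁ r₂ t : ℝ}
    (hx : x ∈ closedBall a (r₂ - t) \ ball a (r₁ + t)) :
    ball x t ⊆ closedBall a r₂ \ ball a r₁ := by
  intro y hy
  simp only [Set.mem_sdiff, mem_closedBall, mem_ball, not_lt] at hx ⊢
  rw [mem_ball] at hy
  constructor
  · linarith [dist_triangle y x a]
  · linarith [dist_triangle x y a, dist_comm x y]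

lemma sub_lt_volume_real_inter_closedBall_diff_ball {T : Set ℂ} {R t η : ℝ} (hR : 0 < R)
    (ht : 0 ≤ t) (htR : 2 * t ≤ R) (hd : η < densIn T (annulus R)) :
    3 * π * η * R ^ 2 - 6 * π * R * t <
      volume.real (T ∩ (closedBall 0 (2 * R - t) \ ball 0 (R + t))) := by
  set A' : Set ℂ := closedBall 0 (2 * R - t) \ ball 0 (R + t)
  have hA : volume.real (annulus R) = 3 * π * R ^ 2 := by
    rw [annulus_eq_closedBall_diff_ball, volume_real_closedBall_diff_ball 0 hR.le (by linarith)]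
    ring
  have hA'A : A' ⊆ annulus R := by
    rw [annulus_eq_closedBall_diff_ball]
    exact sdiff_subset_sdiff (closedBall_subset_closedBall (by linarith))
      (ball_subset_ball (by linarith))
  have hfin : ∀ U ⊆ annulus R, volume U ≠ ⊤ := fun U hU => by
    rw [annulus_eq_closedBall_diff_ball] at hU
    exact (isBounded_closedBall.subset (hU.trans sdiff_subset)).measure_lt_top.ne
  have hstrips : volume.real (annulus R \ A') = 6 * π * R * t := by
    rw [measureReal_sdiff hA'A (measurableSet_closedBall.diff measurableSet_ball)
      (hfin _ subset_rfl), hA, volume_real_closedBall_diff_ball 0 (by linarith) (by linarith)]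
    ring
  have hTA : η * (3 * π * R ^ 2) < volume.real (T ∩ annulus R) := by
    rwa [densIn, ← measureReal_def, ← measureReal_def, hA, lt_div_iff₀ (by positivity)] at hd
  have hsplit :
      volume.real (T ∩ annulus R) ≤ volume.real (T ∩ A') + volume.real (annulus R \ A') :=
    (measureReal_mono (fun z hz => (em (z ∈ A')).elim (fun h => .inl ⟨hz.1, h⟩)
      (fun h => .inr ⟨hz.2, h⟩)) (hfin _ (union_subset (inter_subset_right.trans hA'A)
        sdiff_subset))).trans (measureReal_union_le _ _)
  linarith

theorem exists_disjoint_balls_of_lt_densIn {T : Set ℂ} {R t η : ℝ} (hR : 0 < R) (ht : 0 < t)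
    (htR : 2 * t ≤ R) (hη : 6 * π * t ≤ (3 * π - 8) * η * R) (hd : η < densIn T (annulus R)) :
    ∃ m : ℕ, η / 2 * (R / t) ^ 2 ≤ m ∧ ∃ a : Fin m → ℂ, (∀ j, a j ∈ T ∩ annulus R) ∧
      (∀ j, ball (a j) t ⊆ annulus R) ∧
      Pairwise fun j k => Disjoint (ball (a j) t) (ball (a k) t) := by
  set S := T ∩ (closedBall 0 (2 * R - t) \ ball 0 (R + t))
  have hS := sub_lt_volume_real_inter_closedBall_diff_ball hR ht.le htR hd
  obtain ⟨P, hPS, hsep, hcount⟩ := exists_finset_separated_of_isBounded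
    (by positivity : 0 < 2 * t)
    (isBounded_closedBall.subset (inter_subset_right.trans sdiff_subset) : Bornology.IsBounded S)
  have hball : ∀ x ∈ P, ball x t ⊆ annulus R := fun x hx => by
    rw [annulus_eq_closedBall_diff_ball]
    exact ball_subset_closedBall_diff_ball (hPS hx).2
  let e := P.equivFin.symm
  refine ⟨#P, ?_, fun j => e j, fun j => ⟨(hPS (e j).2).1, hball _ (e j).2 (mem_ball_self ht)⟩,
    fun j => hball _ (e j).2, fun j k hjk => ball_disjoint_ball ?_⟩
  · rw [div_pow, ← mul_div_assoc, div_le_iff₀ (by positivity)]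
    nlinarith
  · linarith [hsep (e j).2 (e k).2 fun h => hjk (e.injective (Subtype.ext h))]

theorem many_disjoint_disks_in_Tset_general (f : ℂ → ℂ)
    (hf : Differentiable ℂ f)
    (htrans : ¬ ∃ p : Polynomial ℂ, ∀ z, f z = p.eval z)
    (α₁ α₂ η : ℝ) (hα₁ : 0 < α₁) (hη : 0 < η)
    (q lam : ℝ)
    (hdens : ∃ R₁ : ℝ, ∀ R, R₁ ≤ R → η < densIn (Tset f α₁ α₂ q lam) (annulus R))
    (μ : ℝ) (hμ : 0 < μ) :
    ∃ R₀ : ℝ, ∀ R, R₀ ≤ R →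
      ∃ m : ℕ, 0 < m ∧
        η / 2 * (R / (2 * μ * R / (α₁ * Real.log (maxMod f R)))) ^ 2 ≤ (m : ℝ) ∧
        ∃ a : Fin m → ℂ,
          (∀ j, a j ∈ Tset f α₁ α₂ q lam ∩ annulus R) ∧
          (∀ j, Metric.ball (a j) (2 * μ * R / (α₁ * Real.log (maxMod f R))) ⊆ annulus R) ∧
          (∀ j k, j ≠ k →
            Disjoint (Metric.ball (a j) (2 * μ * R / (α₁ * Real.log (maxMod f R))))
              (Metric.ball (a k) (2 * μ * R / (α₁ * Real.log (maxMod f R))))) := by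
  have hL : Tendsto (fun R => Real.log (maxMod f R)) atTop atTop :=
    Real.tendsto_log_atTop.comp <| tendsto_maxMod_atTop hf fun ⟨c, hc⟩ =>
      htrans ⟨Polynomial.C c, by simpa using hc⟩
  have h3π : 0 < 3 * π - 8 := by linarith [Real.pi_gt_three]
  obtain ⟨R₀, hR₀⟩ := eventually_atTop.1 <| (eventually_gt_atTop 0).and <|
    (hL.eventually_ge_atTop (4 * μ / α₁)).and <|
    (hL.eventually_ge_atTop (12 * π * μ / ((3 * π - 8) * η * α₁))).and (eventually_atTop.2 hdens)
  refine ⟨R₀, fun R hR => ?_⟩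
  obtain ⟨hR, hL₁, hL₂, hd⟩ := hR₀ R hR
  set L := Real.log (maxMod f R)
  have hL₀ : 0 < L := (by positivity : 0 < 4 * μ / α₁).trans_le hL₁
  rw [div_le_iff₀ hα₁] at hL₁
  rw [div_le_iff₀ (by positivity)] at hL₂
  set t := 2 * μ * R / (α₁ * L)
  have ht : 0 < t := by positivity
  have htR : 2 * t ≤ R := by
    rw [← mul_div_assoc, div_le_iff₀ (by positivity)]
    nlinarith
  have htη : 6 * π * t ≤ (3 * π - 8) * η * R := by
    rw [← mul_div_assoc, div_le_iff₀ (by positivity)]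
    nlinarith
  obtain ⟨m, hm, a, haT, hball, hdisj⟩ := exists_disjoint_balls_of_lt_densIn hR ht htR htη hd
  refine ⟨m, ?_, hm, a, haT, hball, fun j k hjk => hdisj hjk⟩
  exact_mod_cast (by positivity : 0 < η / 2 * (R / t) ^ 2).trans_le hm

theorem many_disjoint_disks_in_Tset (f : ℂ → ℂ)
    (hf : Differentiable ℂ f)
    (htrans : ¬ ∃ p : Polynomial ℂ, ∀ z, f z = p.eval z)
    (A B C r₀ : ℝ) (hA : 1 < A) (hB : 1 < B) (hC : 1 < C) (hr₀ : 1 < r₀)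
    (hreg : ∀ r, r₀ ≤ r →
      A * Real.log (maxMod f r) ≤ Real.log (maxMod f (C * r)) ∧
      Real.log (maxMod f (C * r)) ≤ B * Real.log (maxMod f r))
    (α₁ α₂ η : ℝ) (hα₁ : 0 < α₁) (hα₂ : 0 < α₂) (hη : 0 < η)
    (q lam : ℝ) (hq : 0 ≤ q) (hlam : 0 ≤ lam)
    (hdens : ∃ R₁ : ℝ, ∀ R, R₁ ≤ R → η < densIn (Tset f α₁ α₂ q lam) (annulus R))
    (μ : ℝ) (hμ : 0 < μ) :
    ∃ R₀ : ℝ, ∀ R, R₀ ≤ R →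
      ∃ m : ℕ, 0 < m ∧
        η / 2 * (R / (2 * μ * R / (α₁ * Real.log (maxMod f R)))) ^ 2 ≤ (m : ℝ) ∧
        ∃ a : Fin m → ℂ,
          (∀ j, a j ∈ Tset f α₁ α₂ q lam ∩ annulus R) ∧
          (∀ j, Metric.ball (a j) (2 * μ * R / (α₁ * Real.log (maxMod f R))) ⊆ annulus R) ∧
          (∀ j k, j ≠ k →
            Disjoint (Metric.ball (a j) (2 * μ * R / (α₁ * Real.log (maxMod f R))))
              (Metric.ball (a k) (2 * μ * R / (α₁ * Real.log (maxMod f R))))) :=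
  many_disjoint_disks_in_Tset_general f hf htrans α₁ α₂ η hα₁ hη q lam hdens μ hμ
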